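/- arXiv:1304.6663 — 4 statements merged into one kernel-verified Lean document; each statement's English description precedes it below -/
import Mathlib

section
/- Let Y* ∈ R^{n×p} satisfy S Y* = 0 where S = ∇f(Y*Y*ᵀ) is the Euclidean gradient of a smooth f at X = Y*Y*ᵀ. Let v be a unit vector with vᵀSv = λ_min(S) < 0, and set Y₀ = [Y* | 0] ∈ R^{n×(p+1)} and Z = [0 | v]. Then the second-order directional derivative of g(Y) = f(YYᵀ) at Y₀ along Z equals 2vᵀSv < 0; hence Z is a descent direction at the critical point Y₀. -/
open Matrix

attribute [local instance] Matrix.frobeniusSeminormedAddCommGroup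
  Matrix.frobeniusNormedAddCommGroup Matrix.frobeniusNormedSpace

theorem descent_direction_at_saddle (n p : ℕ)
    (f : Matrix (Fin n) (Fin n) ℝ → ℝ)
    (gradF : Matrix (Fin n) (Fin n) ℝ → Matrix (Fin n) (Fin n) ℝ)
    (hf : ContDiff ℝ 2 f)
    (hsymm : ∀ X, (gradF X)ᵀ = gradF X)
    (hgrad : ∀ X V, fderiv ℝ f X V = Matrix.trace (Vᵀ * gradF X))
    (Ystar : Matrix (Fin n) (Fin p) ℝ)
    (hcrit : gradF (Ystar * Ystarᵀ) * Ystar = 0)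
    (v : Fin n → ℝ) (hunit : v ⬝ᵥ v = 1)
    (hmin : ∀ w : Fin n → ℝ, w ⬝ᵥ w = 1 →
      v ⬝ᵥ (gradF (Ystar * Ystarᵀ) *ᵥ v) ≤ w ⬝ᵥ (gradF (Ystar * Ystarᵀ) *ᵥ w))
    (hneg : v ⬝ᵥ (gradF (Ystar * Ystarᵀ) *ᵥ v) < 0) :
    deriv (deriv (fun t : ℝ =>
        (fun W : Matrix (Fin n) (Fin p ⊕ Unit) ℝ => f (W * Wᵀ))
          (Matrix.fromCols Ystar 0 +
            t • Matrix.fromCols (0 : Matrix (Fin n) (Fin p) ℝ)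
              (Matrix.of fun i (_ : Unit) => v i)))) 0 =
      2 * (v ⬝ᵥ (gradF (Ystar * Ystarᵀ) *ᵥ v)) ∧
    2 * (v ⬝ᵥ (gradF (Ystar * Ystarᵀ) *ᵥ v)) < 0 := by
  set X₀ : Matrix (Fin n) (Fin n) ℝ := Ystar * Ystarᵀ with hX₀
  set S : Matrix (Fin n) (Fin n) ℝ := gradF X₀ with hS
  set M : Matrix (Fin n) (Fin n) ℝ := Matrix.of fun i j => v i * v j with hM
  set Vcol : Matrix (Fin n) Unit ℝ := Matrix.of fun i (_ : Unit) => v i with hV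
  -- rewrite the function
  have hfun : (fun t : ℝ =>
        (fun W : Matrix (Fin n) (Fin p ⊕ Unit) ℝ => f (W * Wᵀ))
          (Matrix.fromCols Ystar 0 +
            t • Matrix.fromCols (0 : Matrix (Fin n) (Fin p) ℝ) Vcol))
      = fun t : ℝ => f (X₀ + t ^ 2 • M) := by
    funext t
    simp only
    congr 1
    have h1 : Matrix.fromCols Ystar (0 : Matrix (Fin n) Unit ℝ) +
        t • Matrix.fromCols (0 : Matrix (Fin n) (Fin p) ℝ) Vcol
        = Matrix.fromCols Ystar (t • Vcol) := by
      ext i (j | j) <;> simp [Matrix.fromCols]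
    rw [h1, Matrix.transpose_fromCols, Matrix.fromCols_mul_fromRows]
    congr 1
    have : Vcol * Vcolᵀ = M := by
      ext i j
      simp [Matrix.mul_apply, hM, hV]
    rw [Matrix.transpose_smul, Matrix.smul_mul, Matrix.mul_smul, this, smul_smul]
    ring_nf
  rw [hfun]
  -- derivative setup
  have hfd : Differentiable ℝ f := hf.differentiable (by norm_num)
  set φ : ℝ → ℝ := fun t => fderiv ℝ f (X₀ + t ^ 2 • M) M with hφ
  have hc : ∀ t : ℝ, HasDerivAt (fun t : ℝ => X₀ + t ^ 2 • M) ((2 * t) • M) t := by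
    intro t
    have := ((hasDerivAt_pow 2 t).smul_const M).const_add X₀
    exact this.congr_deriv (by simp)
  have hd1 : ∀ t : ℝ, HasDerivAt (fun t : ℝ => f (X₀ + t ^ 2 • M)) (2 * t * φ t) t := by
    intro t
    have h := (hfd (X₀ + t ^ 2 • M)).hasFDerivAt.comp_hasDerivAt t (hc t)
    exact h.congr_deriv ((fderiv ℝ f (X₀ + t ^ 2 • M)).map_smul (2 * t) M)
  have hderiv1 : deriv (fun t : ℝ => f (X₀ + t ^ 2 • M)) = fun t => 2 * t * φ t := by
    funext t; exact (hd1 t).deriv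
  rw [hderiv1]
  -- differentiability of φ at 0
  have hφdiff : DifferentiableAt ℝ φ 0 := by
    have h1 := hf.fderiv_right (m := 1) (by norm_num)
    have h2 : ContDiff ℝ 1 (fun X => fderiv ℝ f X M) :=
      (ContinuousLinearMap.apply ℝ ℝ M).contDiff.comp h1
    have h3 : DifferentiableAt ℝ (fun X => fderiv ℝ f X M) (X₀ + (0:ℝ) ^ 2 • M) :=
      (h2.differentiable one_ne_zero).differentiableAt
    exact h3.comp 0 (hc 0).differentiableAt
  have hd2 : HasDerivAt (fun t : ℝ => 2 * t * φ t) (2 * φ 0) 0 := by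
    have ha : HasDerivAt (fun t : ℝ => 2 * t) 2 0 := by
      simpa using (hasDerivAt_id (0:ℝ)).const_mul 2
    have := ha.mul hφdiff.hasDerivAt
    exact this.congr_deriv (by simp)
  rw [hd2.deriv]
  have hφ0 : φ 0 = v ⬝ᵥ (S *ᵥ v) := by
    have : φ 0 = fderiv ℝ f X₀ M := by simp [hφ]
    rw [this, hgrad]
    simp only [Matrix.trace, Matrix.diag, Matrix.mul_apply, Matrix.transpose_apply,
      Matrix.mulVec, dotProduct, hM, Matrix.of_apply, ← hS]
    rw [Finset.sum_comm]
    apply Finset.sum_congr rfl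
    intro i _
    rw [Finset.mul_sum]
    apply Finset.sum_congr rfl
    intro j _
    ring
  constructor
  · rw [hφ0]
  · linarith
end

section
/- If Y* ∈ R^{n×p} is a critical point of g(Y) = f(YYᵀ) (i.e., ∇f(Y*Y*ᵀ)Y* = 0) and S = ∇f(Y*Y*ᵀ) is positive semidefinite, with f convex on positive semidefinite matrices, then X* = Y*Y*ᵀ is a global minimizer of f over the set of n×n positive semidefinite matrices. -/
open Matrix Filter

lemma psd_trace_nonneg {n : ℕ} {M : Matrix (Fin n) (Fin n) ℝ} (hM : M.PosSemidef) :
    0 ≤ M.trace := by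
  rw [Matrix.trace]
  apply Finset.sum_nonneg
  intro i _
  have := hM.diag_nonneg (i := i)
  simpa [Matrix.mulVec_single, dotProduct, Pi.single_apply, Finset.sum_ite_eq] using this

lemma psd_trace_mul_nonneg {n : ℕ} {S X : Matrix (Fin n) (Fin n) ℝ}
    (hS : S.PosSemidef) (hX : X.PosSemidef) : 0 ≤ (S * X).trace := by
  obtain ⟨A, hherm, hAA⟩ : ∃ A : Matrix (Fin n) (Fin n) ℝ, Aᴴ = A ∧ A * A = X :=
    by open scoped MatrixOrder in exact ⟨CFC.sqrt X, (CFC.sqrt_nonneg X).posSemidef.isHermitian, by have := CFC.sq_sqrt X hX.nonneg; rwa [pow_two] at this⟩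
  have hpsd : (Aᴴ * S * A).PosSemidef := hS.conjTranspose_mul_mul_same _
  have heq : (S * X).trace = (Aᴴ * S * A).trace := by
    rw [hherm, ← hAA, ← Matrix.mul_assoc, Matrix.trace_mul_cycle]
  rw [heq]
  exact psd_trace_nonneg hpsd

theorem psd_critical_point_global_min (n p : ℕ)
    (f : Matrix (Fin n) (Fin n) ℝ → ℝ)
    (gradF : Matrix (Fin n) (Fin n) ℝ → Matrix (Fin n) (Fin n) ℝ)
    (hconv : ConvexOn ℝ Set.univ f)
    (hf : ∀ X V, HasDerivAt (fun t : ℝ => f (X + t • V))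
      (Matrix.trace (Vᵀ * gradF X)) 0)
    (Ystar : Matrix (Fin n) (Fin p) ℝ)
    (hcrit : gradF (Ystar * Ystarᵀ) * Ystar = 0)
    (hpsd : (gradF (Ystar * Ystarᵀ)).PosSemidef) :
    ∀ X : Matrix (Fin n) (Fin n) ℝ, X.PosSemidef → f (Ystar * Ystarᵀ) ≤ f X := by
  intro X hX
  set Xs := Ystar * Ystarᵀ with hXs
  set S := gradF Xs with hS
  set V := X - Xs with hV
  -- derivative bound from convexity: trace(Vᵀ S) ≤ f X - f Xs
  have hderiv := hf Xs V
  have hslope : ∀ t : ℝ, t ∈ Set.Ioo (0:ℝ) 1 →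
      (f (Xs + t • V) - f Xs) / t ≤ f X - f Xs := by
    intro t ht
    have hcomb : Xs + t • V = (1 - t) • Xs + t • X := by
      module
    have := hconv.2 (Set.mem_univ Xs) (Set.mem_univ X)
      (by linarith [ht.2] : (0:ℝ) ≤ 1 - t) (le_of_lt ht.1) (by ring)
    rw [← hcomb] at this
    simp only [smul_eq_mul] at this
    rw [div_le_iff₀ ht.1]
    nlinarith [this]
  have hle : Matrix.trace (Vᵀ * S) ≤ f X - f Xs := by
    have htend : Tendsto (fun t : ℝ => (f (Xs + t • V) - f Xs) / t)
        (nhdsWithin 0 (Set.Ioo (0:ℝ) 1)) (nhds (Matrix.trace (Vᵀ * S))) := by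
      have h1 := hasDerivAt_iff_tendsto_slope.mp hderiv
      have h2 : Tendsto (slope (fun t : ℝ => f (Xs + t • V)) 0)
          (nhdsWithin 0 (Set.Ioo (0:ℝ) 1)) (nhds (Matrix.trace (Vᵀ * S))) :=
        h1.mono_left (nhdsWithin_mono 0 (fun x hx => ne_of_gt hx.1))
      refine h2.congr' ?_
      filter_upwards [self_mem_nhdsWithin] with t ht
      simp [slope_def_field]
    have hne : (nhdsWithin (0:ℝ) (Set.Ioo (0:ℝ) 1)).NeBot := by
      apply IsGLB.nhdsWithin_neBot
      · exact isGLB_Ioo one_pos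
      · exact Set.nonempty_Ioo.mpr one_pos
    exact le_of_tendsto htend (eventually_nhdsWithin_of_forall hslope)
  -- trace(Vᵀ S) = trace(S X) - trace(S Xs) = trace(S X) ≥ 0
  have htr : Matrix.trace (Vᵀ * S) = Matrix.trace (S * X) := by
    have hsym : Sᵀ = S := hpsd.isHermitian
    have h0 : Matrix.trace (Xsᵀ * S) = 0 := by
      have : Xsᵀ * S = Ystar * (S * Ystar)ᵀ := by
        rw [hXs, Matrix.transpose_mul, Matrix.transpose_transpose, Matrix.transpose_mul,
          hsym, Matrix.mul_assoc]
      rw [this, hcrit]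
      simp
    have : Matrix.trace (Vᵀ * S) = Matrix.trace (Xᵀ * S) - Matrix.trace (Xsᵀ * S) := by
      rw [hV, Matrix.transpose_sub, Matrix.sub_mul, Matrix.trace_sub]
    have hXsym : Xᵀ = X := hX.isHermitian
    rw [this, h0, sub_zero, Matrix.trace_mul_comm, hXsym]
  have hnn : 0 ≤ Matrix.trace (Vᵀ * S) := htr ▸ psd_trace_mul_nonneg hpsd hX
  linarith
end

section
/- The kernel of κ on symmetric matrices contains exactly the matrices of the form v1ᵀ + 1vᵀ: κ(X) = 0 if and only if X = v1ᵀ + 1vᵀ for some vector v ∈ R^n. -/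
open Matrix

/-- `κ(X) = Diag(X)𝟙ᵀ + 𝟙 Diag(X)ᵀ − 2X`. -/
def kappa {n : ℕ} (X : Matrix (Fin n) (Fin n) ℝ) : Matrix (Fin n) (Fin n) ℝ :=
  Matrix.vecMulVec X.diag 1 + Matrix.vecMulVec 1 X.diag - (2 : ℝ) • X

theorem kappa_kernel {n : ℕ} (X : Matrix (Fin n) (Fin n) ℝ) (hX : X.IsSymm) :
    kappa X = 0 ↔ ∃ v : Fin n → ℝ,
      X = Matrix.vecMulVec v 1 + Matrix.vecMulVec 1 v := by
  constructor
  · intro h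
    refine ⟨fun i => X.diag i / 2, ?_⟩
    ext i j
    have := congrFun (congrFun h i) j
    simp [kappa, vecMulVec, Matrix.diag] at this ⊢
    linarith
  · rintro ⟨v, rfl⟩
    ext i j
    simp [kappa, vecMulVec, Matrix.diag]
    ring
end

section
/- If X is positive semidefinite and κ(X) = 0, then X = c·11ᵀ for some c ≥ 0. -/
open Matrix

theorem kappa_kernel_psd {n : ℕ} (X : Matrix (Fin n) (Fin n) ℝ)
    (hX : X.PosSemidef) (hk : kappa X = 0) :
    ∃ c : ℝ, 0 ≤ c ∧ X = c • Matrix.vecMulVec 1 1 := by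
  rcases n with _ | m
  · exact ⟨0, le_refl _, by ext i; exact i.elim0⟩
  obtain ⟨A, hA⟩ : ∃ A : Matrix (Fin (m+1)) (Fin (m+1)) ℝ, X = Aᴴ * A := by
    classical
    open scoped MatrixOrder in
    obtain ⟨B, hB, -, hBX⟩ := sub_zero X ▸ CFC.exists_sqrt_of_isSelfAdjoint_of_quasispectrumRestricts hX.isHermitian
      (QuasispectrumRestricts.nnreal_of_nonneg hX.nonneg)
    exact ⟨B, by rw [sub_zero] at hBX; rw [← hBX, ← Matrix.star_eq_conjTranspose, hB.star_eq]⟩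
  have hentry : ∀ i j, X i j = ∑ k, A k i * A k j := by
    intro i j
    rw [hA]
    simp [Matrix.mul_apply, Matrix.conjTranspose_apply]
  have hkap : ∀ i j, X i i + X j j - 2 * X i j = 0 := by
    intro i j
    have := congr_fun (congr_fun hk i) j
    simp [kappa, Matrix.vecMulVec, Matrix.diag] at this
    linarith
  have hcol : ∀ i j k, A k i = A k j := by
    intro i j k
    have hsum : ∑ k, (A k i - A k j) ^ 2 = 0 := by
      have : ∑ k, (A k i - A k j) ^ 2
          = X i i + X j j - 2 * X i j := by
        rw [hentry i i, hentry j j, hentry i j, ← Finset.sum_add_distrib,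
          Finset.mul_sum, ← Finset.sum_sub_distrib]
        apply Finset.sum_congr rfl
        intro k _
        ring
      rw [this, hkap]
    have hz := (Finset.sum_eq_zero_iff_of_nonneg (fun k _ => sq_nonneg _)).mp hsum
      k (Finset.mem_univ k)
    have := pow_eq_zero_iff (n := 2) (by norm_num) |>.mp hz
    linarith
  refine ⟨X 0 0, ?_, ?_⟩
  · rw [hentry]
    exact Finset.sum_nonneg fun k _ => mul_self_nonneg _
  · ext i j
    have : X i j = X 0 0 := by
      rw [hentry, hentry]
      apply Finset.sum_congr rfl
      intro k _
      rw [hcol i 0 k, hcol j 0 k]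
    simp [Matrix.vecMulVec, this]
end
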